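/- arXiv:1905.13610 — 3 statements merged into one kernel-verified Lean document; each statement's English description precedes it below -/
import Mathlib

section
/- Let Ω be a field extension of ℚ and let E, E', L be intermediate fields of Ω/ℚ, each of finite degree over ℚ, such that E'/ℚ and L/ℚ are Galois extensions, [E' : ℚ] = 2, [E : ℚ] is odd, and E ∩ L = E' ∩ L = E ∩ E' = ℚ. Then the compositum EE' satisfies EE' ∩ L = ℚ. -/
open IntermediateField Polynomial Module

section Key

variable {F Ω : Type} [Field F] [Field Ω] [Algebra F Ω]

set_option maxHeartbeats 1000000 in
/-- Natural irrationalities (special case): if `L/F` is finite Galois and `A ⊓ L = ⊥`,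
then `[A ⊔ L : F] = [A : F] * [L : F]`. -/
lemma galois_finrank_sup (A L : IntermediateField F Ω)
    [FiniteDimensional F A] [FiniteDimensional F L] [IsGalois F L]
    (h : A ⊓ L = ⊥) :
    finrank F ↥(A ⊔ L) = finrank F A * finrank F L := by
  classical
  obtain ⟨p, hp, hsp⟩ := IsGalois.is_separable_splitting_field F ↥L
  obtain ⟨hsplitL, hL⟩ := IntermediateField.isSplittingField_iff.mp hsp
  have hsplitΩ : (p.map (algebraMap F Ω)).Splits := by
    rw [IsScalarTower.algebraMap_eq F ↥L Ω]
    rw [← Polynomial.map_map]; exact hsplitL.map _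
  set q : Polynomial ↥A := p.map (algebraMap F ↥A) with hq
  have hroots : q.rootSet Ω = p.rootSet Ω := by
    rw [rootSet_def, rootSet_def, hq, aroots_map]
  have hqsplit : (q.map (algebraMap ↥A Ω)).Splits := by
    rw [hq, Polynomial.map_map, ← IsScalarTower.algebraMap_eq]
    exact hsplitΩ
  set M : IntermediateField ↥A Ω := adjoin ↥A (q.rootSet Ω) with hM
  haveI hspM : IsSplittingField ↥A ↥M q := adjoin_rootSet_isSplittingField hqsplit
  haveI : FiniteDimensional ↥A ↥M := IsSplittingField.finiteDimensional ↥M q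
  haveI : IsGalois ↥A ↥M := IsGalois.of_separable_splitting_field (p := q) (hq ▸ hp.map (f := algebraMap F ↥A))
  have hMsup : IntermediateField.restrictScalars F M = A ⊔ L := by
    rw [hM, hroots, restrictScalars_adjoin_eq_sup, ← hL]
  have hLM : ∀ x : Ω, x ∈ L → x ∈ M := by
    intro x hx
    have : x ∈ IntermediateField.restrictScalars F M := by
      rw [hMsup]; exact (le_sup_right : L ≤ A ⊔ L) hx
    exact this
  -- the canonical `F`-algebra embedding of `L` into `M`
  let j : ↥L →ₐ[F] ↥M :=
    { toFun := fun x => ⟨x.1, hLM x.1 x.2⟩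
      map_one' := rfl
      map_mul' := fun _ _ => rfl
      map_zero' := rfl
      map_add' := fun _ _ => rfl
      commutes' := fun r => rfl }
  -- restriction of an `A`-automorphism of `M` to `L`, as an `F`-algebra hom to `Ω`
  let g : (↥M ≃ₐ[↥A] ↥M) → (↥L →ₐ[F] Ω) := fun σ =>
    (M.val.restrictScalars F).comp ((σ.toAlgHom.restrictScalars F).comp j)
  have hrange : ∀ σ, (g σ).fieldRange = L := fun σ => AlgHom.fieldRange_of_normal (g σ)
  have hmemL : ∀ σ (x : ↥L), g σ x ∈ L := by
    intro σ x
    have : g σ x ∈ (g σ).fieldRange := ⟨x, rfl⟩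
    rwa [hrange σ] at this
  let k : (↥M ≃ₐ[↥A] ↥M) → (↥L →ₐ[F] ↥L) := fun σ =>
    { toFun := fun x => ⟨g σ x, hmemL σ x⟩
      map_one' := Subtype.ext ((g σ).map_one)
      map_mul' := fun a b => Subtype.ext ((g σ).map_mul a b)
      map_zero' := Subtype.ext ((g σ).map_zero)
      map_add' := fun a b => Subtype.ext ((g σ).map_add a b)
      commutes' := fun r => Subtype.ext
        (((g σ).commutes r).trans (IsScalarTower.algebraMap_apply F ↥L Ω r)) }
  have hkinj : ∀ σ, Function.Injective (k σ) := by
    intro σ a b hab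
    have h1 := congrArg (Subtype.val : ↥L → Ω) hab
    exact (g σ).toRingHom.injective h1
  have hksurj : ∀ σ, Function.Surjective (k σ) := by
    intro σ y
    have : (y : Ω) ∈ (g σ).fieldRange := by rw [hrange σ]; exact y.2
    obtain ⟨x, hx⟩ := this
    exact ⟨x, Subtype.ext hx⟩
  let φ0 : (↥M ≃ₐ[↥A] ↥M) → (↥L ≃ₐ[F] ↥L) := fun σ =>
    AlgEquiv.ofBijective (k σ) ⟨hkinj σ, hksurj σ⟩
  have hφ0val : ∀ σ (x : ↥L), ((φ0 σ x : ↥L) : Ω) = (σ (j x) : Ω) := fun _ _ => rfl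
  have hjφ0 : ∀ σ (x : ↥L), j (φ0 σ x) = σ (j x) := fun σ x => Subtype.ext (hφ0val σ x)
  have hmul : ∀ σ τ, φ0 (σ * τ) = φ0 σ * φ0 τ := by
    intro σ τ
    apply AlgEquiv.ext
    intro x
    apply Subtype.ext
    show (σ (τ (j x)) : Ω) = ((φ0 σ (φ0 τ x) : ↥L) : Ω)
    rw [hφ0val σ (φ0 τ x), hjφ0 τ x]
  let φ : (↥M ≃ₐ[↥A] ↥M) →* (↥L ≃ₐ[F] ↥L) := MonoidHom.mk' φ0 hmul
  -- injectivity of φ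
  have htop : Algebra.adjoin ↥A (q.rootSet ↥M) = ⊤ := IsSplittingField.adjoin_rootSet ↥M q
  have hφinj : Function.Injective φ := by
    intro σ τ hστ
    have hAlg : σ.toAlgHom = τ.toAlgHom := by
      apply AlgHom.ext_of_adjoin_eq_top htop
      intro r hr
      have hr1 : (r : Ω) ∈ p.rootSet Ω := by
        rw [← hroots]
        exact Polynomial.rootSet_mapsTo M.val hr
      have hrL : (r : Ω) ∈ L := by
        rw [hL]
        exact subset_adjoin F _ hr1
      have hjr : j ⟨r.1, hrL⟩ = r := Subtype.ext rfl
      refine Subtype.ext ?_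
      calc (σ r : Ω) = (σ (j ⟨r.1, hrL⟩) : Ω) := by rw [hjr]
        _ = ((φ0 σ ⟨r.1, hrL⟩ : ↥L) : Ω) := (hφ0val σ _).symm
        _ = ((φ0 τ ⟨r.1, hrL⟩ : ↥L) : Ω) :=
              congrArg (fun (e : ↥L ≃ₐ[F] ↥L) => ((e ⟨r.1, hrL⟩ : ↥L) : Ω)) hστ
        _ = (τ (j ⟨r.1, hrL⟩) : Ω) := hφ0val τ _
        _ = (τ r : Ω) := by rw [hjr]
    exact AlgEquiv.ext fun m => DFunLike.congr_fun hAlg m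
  -- surjectivity via fixed fields
  have hbotA : fixedField (⊤ : Subgroup (↥M ≃ₐ[↥A] ↥M)) = ⊥ := by
    rw [← IntermediateField.fixingSubgroup_bot (F := ↥A) (E := ↥M)]
    exact IsGalois.fixedField_fixingSubgroup ⊥
  have hff : fixedField φ.range = ⊥ := by
    apply le_antisymm _ bot_le
    intro x hx
    have hxM : (x : Ω) ∈ M := hLM _ x.2
    have hjx : j x = ⟨x.1, hxM⟩ := rfl
    have hfix : (⟨x.1, hxM⟩ : ↥M) ∈ fixedField (⊤ : Subgroup (↥M ≃ₐ[↥A] ↥M)) := by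
      intro g'
      have h1 : φ g'.1 x = x := hx ⟨φ g'.1, ⟨g'.1, rfl⟩⟩
      have h2 : ((φ0 g'.1 x : ↥L) : Ω) = (x : Ω) := congrArg Subtype.val h1
      rw [hφ0val g'.1 x, hjx] at h2
      exact Subtype.ext h2
    rw [hbotA] at hfix
    rw [IntermediateField.mem_bot] at hfix
    obtain ⟨a, ha⟩ := hfix
    have hxA : (x : Ω) ∈ A := by
      have : ((algebraMap ↥A ↥M a : ↥M) : Ω) = (x : Ω) := congrArg Subtype.val ha
      rw [← this]
      exact a.2
    have hxAL : (x : Ω) ∈ A ⊓ L := ⟨hxA, x.2⟩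
    rw [h, IntermediateField.mem_bot] at hxAL
    obtain ⟨r, hr⟩ := hxAL
    rw [IntermediateField.mem_bot]
    exact ⟨r, Subtype.ext (by rw [← hr, IsScalarTower.algebraMap_apply F ↥L Ω]; rfl)⟩
  have hrangeTop : φ.range = ⊤ := by
    have h1 := IntermediateField.fixingSubgroup_fixedField φ.range
    rw [hff, IntermediateField.fixingSubgroup_bot] at h1
    exact h1.symm
  have hφsurj : Function.Surjective φ := by
    intro y
    have : y ∈ φ.range := hrangeTop ▸ Subgroup.mem_top y
    exact this
  -- counting
  have hcard : finrank ↥A ↥M = finrank F ↥L := by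
    rw [← IsGalois.card_aut_eq_finrank ↥A ↥M, ← IsGalois.card_aut_eq_finrank F ↥L]
    exact Nat.card_eq_of_bijective φ ⟨hφinj, hφsurj⟩
  -- put things together
  have hle : A ≤ A ⊔ L := le_sup_left
  have hext : extendScalars hle = M := by
    apply IntermediateField.restrictScalars_injective F
    rw [extendScalars_restrictScalars, hMsup]
  have hmulrank := IntermediateField.finrank_bot_mul_relfinrank hle
  rw [IntermediateField.relfinrank_eq_finrank_of_le hle, hext, hcard] at hmulrank
  exact hmulrank.symm

/-- Generic version of the main theorem, over an arbitrary base field. -/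
theorem compositum_aux (E E' L : IntermediateField F Ω)
    [FiniteDimensional F E] [FiniteDimensional F E'] [FiniteDimensional F L]
    [IsGalois F E'] [IsGalois F L]
    (hE' : Module.finrank F E' = 2) (hE : Odd (Module.finrank F E))
    (h1 : E ⊓ L = ⊥) (h2 : E' ⊓ L = ⊥) :
    (E ⊔ E') ⊓ L = ⊥ := by
  haveI : FiniteDimensional F ↥(E ⊔ E') := IntermediateField.finiteDimensional_sup E E'
  haveI : FiniteDimensional F ↥(E ⊔ E' ⊔ L) := IntermediateField.finiteDimensional_sup _ L
  set n := finrank F E with hn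
  set l := finrank F L with hl
  have hlpos : 0 < l := finrank_pos
  have hnpos : 0 < n := finrank_pos
  have key1 : finrank F ↥(E ⊔ L) = n * l := galois_finrank_sup E L h1
  have key2 : finrank F ↥(E' ⊔ L) = 2 * l := by
    rw [galois_finrank_sup E' L h2, hE']
  have hcop : Nat.Coprime 2 n := by
    rw [Nat.prime_two.coprime_iff_not_dvd]
    intro h2n
    rw [Nat.odd_iff] at hE
    omega
  -- the compositum `E ⊔ E'` has degree `2 * n`
  have hFdvd1 : n ∣ finrank F ↥(E ⊔ E') :=
    ⟨_, (IntermediateField.finrank_bot_mul_relfinrank (le_sup_left : E ≤ E ⊔ E')).symm⟩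
  have hFdvd2 : 2 ∣ finrank F ↥(E ⊔ E') := by
    rw [← hE']
    exact ⟨_, (IntermediateField.finrank_bot_mul_relfinrank (le_sup_right : E' ≤ E ⊔ E')).symm⟩
  have hFdvd : 2 * n ∣ finrank F ↥(E ⊔ E') :=
    hcop.mul_dvd_of_dvd_of_dvd hFdvd2 hFdvd1
  have hFle : finrank F ↥(E ⊔ E') ≤ 2 * n := by
    have := IntermediateField.finrank_sup_le E E'
    rw [hE'] at this
    omega
  have hFpos : 0 < finrank F ↥(E ⊔ E') := finrank_pos
  have hF : finrank F ↥(E ⊔ E') = 2 * n :=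
    le_antisymm hFle (Nat.le_of_dvd hFpos hFdvd)
  -- the big compositum has degree `2 * n * l`
  set t := finrank F ↥(E ⊔ E' ⊔ L) with ht
  have htpos : 0 < t := finrank_pos
  have hTle : t ≤ 2 * n * l := by
    have := IntermediateField.finrank_sup_le (E ⊔ E') L
    rw [hF] at this
    exact this
  have hTdvd1 : n * l ∣ t := by
    rw [← key1]
    exact ⟨_, (IntermediateField.finrank_bot_mul_relfinrank
      (sup_le_sup_right (le_sup_left : E ≤ E ⊔ E') L : E ⊔ L ≤ E ⊔ E' ⊔ L)).symm⟩
  have hTdvd2 : 2 * l ∣ t := by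
    rw [← key2]
    exact ⟨_, (IntermediateField.finrank_bot_mul_relfinrank
      (sup_le_sup_right (le_sup_right : E' ≤ E ⊔ E') L : E' ⊔ L ≤ E ⊔ E' ⊔ L)).symm⟩
  have hTdvd : 2 * n * l ∣ t := by
    obtain ⟨s, hs⟩ := hTdvd1
    obtain ⟨u, hu⟩ := hTdvd2
    have h2s : 2 ∣ n * s := by
      refine ⟨u, ?_⟩
      have hls : l * (n * s) = l * (2 * u) := by
        calc l * (n * s) = n * l * s := by ring
        _ = t := hs.symm
        _ = 2 * l * u := hu
        _ = l * (2 * u) := by ring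
      exact Nat.eq_of_mul_eq_mul_left hlpos hls
    have h2dvds : 2 ∣ s := (Nat.Coprime.dvd_of_dvd_mul_left hcop h2s)
    obtain ⟨v, hv⟩ := h2dvds
    exact ⟨v, by rw [hs, hv]; ring⟩
  have hT : t = 2 * n * l := le_antisymm hTle (Nat.le_of_dvd htpos hTdvd)
  -- conclude by linear disjointness
  have hfinal : finrank F ↥(E ⊔ E' ⊔ L) = finrank F ↥(E ⊔ E') * finrank F ↥L := by
    rw [← ht, hT, hF, ← hl]
  exact (IntermediateField.LinearDisjoint.of_finrank_sup hfinal).inf_eq_bot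

end Key

/-- Let `Ω/ℚ` be a field extension and `E, E', L` intermediate fields, each finite over `ℚ`,
with `E'/ℚ` and `L/ℚ` Galois, `[E' : ℚ] = 2`, `[E : ℚ]` odd, and
`E ∩ L = E' ∩ L = E ∩ E' = ℚ`.  Then the compositum `EE'` satisfies `EE' ∩ L = ℚ`. -/
theorem compositum_inter_bot (Ω : Type) [Field Ω] [Algebra ℚ Ω]
    (E E' L : IntermediateField ℚ Ω)
    [FiniteDimensional ℚ E] [FiniteDimensional ℚ E'] [FiniteDimensional ℚ L]
    [IsGalois ℚ E'] [IsGalois ℚ L]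
    (hE' : Module.finrank ℚ E' = 2) (hE : Odd (Module.finrank ℚ E))
    (h1 : E ⊓ L = ⊥) (h2 : E' ⊓ L = ⊥) (h3 : E ⊓ E' = ⊥) :
    (E ⊔ E') ⊓ L = ⊥ := by
  refine @compositum_aux ℚ Ω _ _ _ E E' L inferInstance inferInstance inferInstance
    (by convert ‹IsGalois ℚ E'› using 1 <;> exact Subsingleton.elim _ _)
    (by convert ‹IsGalois ℚ L› using 1 <;> exact Subsingleton.elim _ _)
    ?_ ?_ h1 h2
  · convert hE' using 2 <;> exact Subsingleton.elim _ _
  · convert hE using 2 <;> exact Subsingleton.elim _ _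
end

section
/- The group GL(2, 𝔽₃) of invertible 2 × 2 matrices over the field with three elements has exactly one subgroup of index 2 (equivalently, exactly one subgroup of order 24). -/
/-!
An index-two subgroup contains every square, hence the subgroup generated by the squares.
In `GL(2, 𝔽₃)` every matrix of determinant one is a square up to sign, and `-1` is itself the
square of `!![0, 1; -1, 0]`; so `SL(2, 𝔽₃) = ker det`, which has index `|𝔽₃ˣ| = 2`, lies in every
index-two subgroup and therefore equals it.
-/

namespace Subgroup

variable {G : Type*} [Group G]

theorem closure_isSquare_le_of_index_eq_two {H : Subgroup G} (hH : H.index = 2) :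
    closure {g : G | IsSquare g} ≤ H :=
  closure_le H |>.mpr fun _ ⟨g, hg⟩ ↦ hg ▸ sq g ▸ sq_mem_of_index_two hH g

theorem eq_of_index_eq_two_of_le_closure_isSquare {N H : Subgroup G} (hN : N.index = 2)
    (hsq : N ≤ closure {g : G | IsSquare g}) (hH : H.index = 2) : H = N := by
  have hNH : N ≤ H := hsq.trans (closure_isSquare_le_of_index_eq_two hH)
  have hrel := relIndex_mul_index hNH
  rw [hN, hH] at hrel
  exact le_antisymm (relIndex_eq_one.mp (by omega)) hNH

end Subgroup

theorem Units.isSquare_of_isSquare_val {M : Type*} [Monoid M] {u : Mˣ} (h : IsSquare (u : M)) :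
    IsSquare u := by
  obtain ⟨b, hb⟩ := h
  have hb_unit : IsUnit b := isUnit_iff_exists_and_exists.mpr
    ⟨⟨b * ↑u⁻¹, by rw [← mul_assoc, ← hb, Units.mul_inv]⟩,
      ⟨↑u⁻¹ * b, by rw [mul_assoc, ← hb, Units.inv_mul]⟩⟩
  exact ⟨hb_unit.unit, Units.ext hb⟩

-- The sign is needed: the elements of order 6, such as `-!![1, 1; 0, 1]`, are not squares.
set_option maxRecDepth 10000 in
set_option maxHeartbeats 4000000 in
theorem Matrix.exists_eq_mul_self_or_eq_neg_mul_self_of_det_eq_one_zmod_three :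
    ∀ m : Matrix (Fin 2) (Fin 2) (ZMod 3), m.det = 1 → ∃ b, m = b * b ∨ m = -(b * b) := by
  decide

namespace Matrix.GeneralLinearGroup

theorem index_ker_det (n R : Type*) [Fintype n] [DecidableEq n] [Nonempty n] [CommRing R] :
    (det : GL n R →* Rˣ).ker.index = Nat.card Rˣ := by
  rw [Subgroup.index_ker, MonoidHom.range_eq_top_of_surjective _ det_surjective,
    Subgroup.card_top]

theorem isSquare_neg_one_zmod_three : IsSquare (-1 : GL (Fin 2) (ZMod 3)) :=
  Units.isSquare_of_isSquare_val ⟨!![0, 1; 2, 0], by decide⟩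

theorem ker_det_le_closure_isSquare_zmod_three :
    (det : GL (Fin 2) (ZMod 3) →* (ZMod 3)ˣ).ker ≤ Subgroup.closure {g | IsSquare g} := by
  intro g hg
  have hdet : (g : Matrix (Fin 2) (Fin 2) (ZMod 3)).det = 1 := by
    simpa [Units.ext_iff] using hg
  obtain ⟨b, hb | hb⟩ :=
    Matrix.exists_eq_mul_self_or_eq_neg_mul_self_of_det_eq_one_zmod_three _ hdet
  · exact Subgroup.subset_closure (Units.isSquare_of_isSquare_val ⟨b, hb⟩)
  · have hneg : IsSquare (-g) :=
      Units.isSquare_of_isSquare_val ⟨b, by simpa [neg_eq_iff_eq_neg] using hb⟩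
    rw [show g = -1 * -g by simp]
    exact mul_mem (Subgroup.subset_closure isSquare_neg_one_zmod_three)
      (Subgroup.subset_closure hneg)

end Matrix.GeneralLinearGroup

/-- The group `GL(2, 𝔽₃)` has exactly one subgroup of index 2
(equivalently, exactly one subgroup of order 24). -/
theorem gl2_f3_unique_index_two_subgroup :
    ∃! H : Subgroup (GL (Fin 2) (ZMod 3)), H.index = 2 := by
  have hker :
      (Matrix.GeneralLinearGroup.det : GL (Fin 2) (ZMod 3) →* (ZMod 3)ˣ).ker.index = 2 := by
    rw [Matrix.GeneralLinearGroup.index_ker_det, Nat.card_eq_fintype_card, ZMod.card_units]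
  exact ⟨_, hker, fun _ hH ↦ Subgroup.eq_of_index_eq_two_of_le_closure_isSquare hker
    Matrix.GeneralLinearGroup.ker_det_le_closure_isSquare_zmod_three hH⟩
end

section
/- There exists a surjective group homomorphism φ : SL(2, ℤ/4ℤ) → S₄ whose kernel is the center of SL(2, ℤ/4ℤ), and this center is the subgroup {±I} of order 2. In particular, SL(2, ℤ/4ℤ) is a central extension of S₄ by ℤ/2ℤ: there is a short exact sequence 0 → ℤ/2ℤ → SL(2, ℤ/4ℤ) → S₄ → 1 with ℤ/2ℤ mapping into the center. -/
/-- The element `-I` of `SL(2, ℤ/4ℤ)`. -/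
def negOneSL : Matrix.SpecialLinearGroup (Fin 2) (ZMod 4) :=
  ⟨-1, by simp [Matrix.det_neg]⟩

/-- Lookup table for the homomorphism `SL(2, ℤ/4ℤ) → S₄` (the conjugation action on the four
Sylow 3-subgroups), indexed by the matrix entries. -/
def permTable : ℕ → Equiv.Perm (Fin 4)
  | 28 => Equiv.swap 0 1
  | 29 => Equiv.swap 0 2 * Equiv.swap 0 3
  | 30 => Equiv.swap 0 1 * Equiv.swap 0 2 * Equiv.swap 1 3
  | 31 => Equiv.swap 1 2 * Equiv.swap 2 3
  | 52 => Equiv.swap 0 1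
  | 53 => Equiv.swap 1 2 * Equiv.swap 2 3
  | 54 => Equiv.swap 0 1 * Equiv.swap 0 2 * Equiv.swap 1 3
  | 55 => Equiv.swap 0 2 * Equiv.swap 0 3
  | 65 => 1
  | 69 => Equiv.swap 0 1 * Equiv.swap 1 2 * Equiv.swap 1 3
  | 73 => Equiv.swap 0 3 * Equiv.swap 1 2
  | 77 => Equiv.swap 0 1 * Equiv.swap 0 2 * Equiv.swap 2 3
  | 81 => Equiv.swap 0 1 * Equiv.swap 1 2 * Equiv.swap 2 3
  | 86 => Equiv.swap 0 1 * Equiv.swap 0 3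
  | 91 => Equiv.swap 0 2
  | 92 => Equiv.swap 1 2 * Equiv.swap 1 3
  | 97 => Equiv.swap 0 2 * Equiv.swap 1 3
  | 103 => Equiv.swap 1 2
  | 105 => Equiv.swap 0 1 * Equiv.swap 2 3
  | 111 => Equiv.swap 0 3
  | 113 => Equiv.swap 0 1 * Equiv.swap 0 2 * Equiv.swap 0 3
  | 116 => Equiv.swap 0 2 * Equiv.swap 2 3
  | 123 => Equiv.swap 1 3
  | 126 => Equiv.swap 0 1 * Equiv.swap 1 2
  | 149 => Equiv.swap 0 1 * Equiv.swap 0 2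
  | 151 => Equiv.swap 0 1 * Equiv.swap 1 3
  | 156 => Equiv.swap 0 1 * Equiv.swap 0 3 * Equiv.swap 1 2
  | 158 => Equiv.swap 2 3
  | 180 => Equiv.swap 0 1 * Equiv.swap 0 3 * Equiv.swap 1 2
  | 182 => Equiv.swap 2 3
  | 189 => Equiv.swap 0 1 * Equiv.swap 1 3
  | 191 => Equiv.swap 0 1 * Equiv.swap 0 2
  | 195 => 1
  | 199 => Equiv.swap 0 1 * Equiv.swap 0 2 * Equiv.swap 2 3
  | 203 => Equiv.swap 0 3 * Equiv.swap 1 2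
  | 207 => Equiv.swap 0 1 * Equiv.swap 1 2 * Equiv.swap 1 3
  | 211 => Equiv.swap 0 1 * Equiv.swap 0 2 * Equiv.swap 0 3
  | 214 => Equiv.swap 0 1 * Equiv.swap 1 2
  | 217 => Equiv.swap 1 3
  | 220 => Equiv.swap 0 2 * Equiv.swap 2 3
  | 227 => Equiv.swap 0 2 * Equiv.swap 1 3
  | 229 => Equiv.swap 0 3
  | 235 => Equiv.swap 0 1 * Equiv.swap 2 3
  | 237 => Equiv.swap 1 2
  | 243 => Equiv.swap 0 1 * Equiv.swap 1 2 * Equiv.swap 2 3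
  | 244 => Equiv.swap 1 2 * Equiv.swap 1 3
  | 249 => Equiv.swap 0 2
  | 254 => Equiv.swap 0 1 * Equiv.swap 0 3
  | _ => 1

instance : DecidableEq (Matrix.SpecialLinearGroup (Fin 2) (ZMod 4)) :=
  fun A B => decidable_of_iff (A.1 = B.1) Subtype.ext_iff.symm

/-- The underlying function of the homomorphism. -/
def slPermFun (A : Matrix.SpecialLinearGroup (Fin 2) (ZMod 4)) : Equiv.Perm (Fin 4) :=
  permTable ((A.1 0 0).val * 64 + (A.1 0 1).val * 16 + (A.1 1 0).val * 4 + (A.1 1 1).val)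

set_option maxHeartbeats 8000000 in
set_option maxRecDepth 100000 in
lemma slPermFun_mul : ∀ A B : Matrix.SpecialLinearGroup (Fin 2) (ZMod 4),
    slPermFun (A * B) = slPermFun A * slPermFun B := by
  decide

/-- The homomorphism `SL(2, ℤ/4ℤ) → S₄`. -/
def slHom : Matrix.SpecialLinearGroup (Fin 2) (ZMod 4) →* Equiv.Perm (Fin 4) :=
  MonoidHom.mk' slPermFun slPermFun_mul

set_option maxHeartbeats 2000000 in
set_option maxRecDepth 100000 in
lemma slPermFun_surj : ∀ σ : Equiv.Perm (Fin 4),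
    ∃ A : Matrix.SpecialLinearGroup (Fin 2) (ZMod 4), slPermFun A = σ := by
  decide

set_option maxHeartbeats 2000000 in
set_option maxRecDepth 100000 in
lemma slPermFun_ker : ∀ a : Matrix.SpecialLinearGroup (Fin 2) (ZMod 4),
    slPermFun a = 1 ↔ ∀ g : Matrix.SpecialLinearGroup (Fin 2) (ZMod 4), g * a = a * g := by
  decide

set_option maxHeartbeats 2000000 in
set_option maxRecDepth 100000 in
lemma center_char : ∀ a : Matrix.SpecialLinearGroup (Fin 2) (ZMod 4),
    (∀ g : Matrix.SpecialLinearGroup (Fin 2) (ZMod 4), g * a = a * g) ↔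
      (a = 1 ∨ a = negOneSL) := by
  decide

/-- There is a surjective homomorphism `SL(2, ℤ/4ℤ) → S₄` whose kernel is the center of
`SL(2, ℤ/4ℤ)`, the center being `{±I}` of order 2; thus `SL(2, ℤ/4ℤ)` is a central
extension of `S₄` by `ℤ/2ℤ`. -/
theorem sl2_z4_central_extension_s4 :
    ∃ φ : Matrix.SpecialLinearGroup (Fin 2) (ZMod 4) →* Equiv.Perm (Fin 4),
      Function.Surjective φ ∧
      φ.ker = Subgroup.center (Matrix.SpecialLinearGroup (Fin 2) (ZMod 4)) ∧
      (Subgroup.center (Matrix.SpecialLinearGroup (Fin 2) (ZMod 4)) :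
          Set (Matrix.SpecialLinearGroup (Fin 2) (ZMod 4))) = {1, negOneSL} ∧
      Nat.card (Subgroup.center (Matrix.SpecialLinearGroup (Fin 2) (ZMod 4))) = 2 := by
  have hset : (Subgroup.center (Matrix.SpecialLinearGroup (Fin 2) (ZMod 4)) :
      Set (Matrix.SpecialLinearGroup (Fin 2) (ZMod 4))) = {1, negOneSL} := by
    ext a
    simp only [SetLike.mem_coe, Subgroup.mem_center_iff, Set.mem_insert_iff,
      Set.mem_singleton_iff]
    exact center_char a
  refine ⟨slHom, fun σ => slPermFun_surj σ, ?_, hset, ?_⟩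
  · ext a
    rw [MonoidHom.mem_ker, Subgroup.mem_center_iff]
    exact slPermFun_ker a
  · rw [← SetLike.coe_sort_coe, hset, Nat.card_coe_set_eq,
      Set.ncard_pair (by decide : (1 : Matrix.SpecialLinearGroup (Fin 2) (ZMod 4)) ≠ negOneSL)]
end
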